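/- Let F be a field of characteristic ≠ 2 and let a, b ∈ M₂(F) be traceless matrices that are linearly independent over F and satisfy det(a×b) = 0. Then there exists an invertible C ∈ M₂(F) such that C⁻¹aC and C⁻¹bC are both upper triangular; moreover, writing C⁻¹aC = [[a₃, 2a₁],[0, −a₃]] and C⁻¹bC = [[b₃, 2b₁],[0, −b₃]], one has (C⁻¹aC)×(C⁻¹bC) = [[0, 2(a₃b₁ − a₁b₃)],[0, 0]] and b₃·(C⁻¹aC) − a₃·(C⁻¹bC) + (C⁻¹aC)×(C⁻¹bC) = 0. -/

import Mathlib

/-!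
Since `x² = -det(x)·1` for traceless `x` (Cayley–Hamilton), both `a` and `b` anticommute with
`a × b`, hence map `ker (a × b)` into itself. Under the
coordinates `a ↦ (a₀₀, a₀₁, a₁₀)` the matrix cross product becomes the vector cross product on
`F³`, so linear independence of `a, b` forces `a × b ≠ 0`; with `det (a × b) = 0` its kernel is a
line, spanned by a common eigenvector `v` of `a` and `b`. Conjugating by any invertible `C` with
first column `v` makes both matrices upper triangular.
-/

open Matrix

/-- The cross product of traceless 2×2 matrices: `a×b = (ab - ba)/2`. -/
noncomputable def matCross {F : Type*} [Field F] (a b : Matrix (Fin 2) (Fin 2) F) :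
    Matrix (Fin 2) (Fin 2) F :=
  (2 : F)⁻¹ • (a * b - b * a)

section Conjugation

variable {F : Type*} [Field F]

lemma conj_apply_eq_zero_of_mulVec_col_eq_smul {n : Type*} [Fintype n] [DecidableEq n]
    {C : Matrix n n F} (hC : IsUnit C) {M : Matrix n n F} {j : n} {t : F}
    (hM : M *ᵥ C.col j = t • C.col j) {i : n} (hij : i ≠ j) : (C⁻¹ * M * C) i j = 0 := by
  have hcol : (C⁻¹ * M * C).col j = t • Pi.single j 1 := by
    rw [← mulVec_single_one, ← mulVec_mulVec, mulVec_single_one, ← mulVec_mulVec, hM,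
      mulVec_smul, ← mulVec_single_one, mulVec_mulVec,
      nonsing_inv_mul _ ((isUnit_iff_isUnit_det _).mp hC), one_mulVec]
  simpa [hij] using congrFun hcol i

lemma exists_isUnit_col_zero_eq {v : Fin 2 → F} (hv : v ≠ 0) :
    ∃ C : Matrix (Fin 2) (Fin 2) F, IsUnit C ∧ C.col 0 = v := by
  by_cases h0 : v 0 = 0
  · have h1 : v 1 ≠ 0 := fun h1 => hv (by ext i; fin_cases i <;> simp [h0, h1])
    refine ⟨!![v 0, 1; v 1, 0], ?_, ?_⟩
    · simp [isUnit_iff_isUnit_det, det_fin_two_of, h1]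
    · ext i; fin_cases i <;> rfl
  · refine ⟨!![v 0, 0; v 1, 1], ?_, ?_⟩
    · simp [isUnit_iff_isUnit_det, det_fin_two_of, h0]
    · ext i; fin_cases i <;> rfl

lemma exists_smul_eq_of_mulVec_eq_zero {c : Matrix (Fin 2) (Fin 2) F} (hc : c ≠ 0)
    {v u : Fin 2 → F} (hv0 : v ≠ 0) (hv : c *ᵥ v = 0) (hu : c *ᵥ u = 0) :
    ∃ t : F, t • v = u := by
  have hrange : 0 < Module.finrank F (LinearMap.range (toLin' c)) := by
    rw [Module.finrank_pos_iff, Submodule.nontrivial_iff_ne_bot, Ne, LinearMap.range_eq_bot,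
      LinearEquiv.map_eq_zero_iff]
    exact hc
  have hker : 0 < Module.finrank F (LinearMap.ker (toLin' c)) := by
    rw [Module.finrank_pos_iff, Submodule.nontrivial_iff_ne_bot, Submodule.ne_bot_iff]
    exact ⟨v, hv, hv0⟩
  have hsum := LinearMap.finrank_range_add_finrank_ker (toLin' c)
  rw [Module.finrank_fin_fun] at hsum
  have hker_one : Module.finrank F (LinearMap.ker (toLin' c)) = 1 := by omega
  obtain ⟨t, ht⟩ := (finrank_eq_one_iff_of_nonzero' (⟨v, hv⟩ : LinearMap.ker (toLin' c))
    (fun h => hv0 (congrArg Subtype.val h))).mp hker_one ⟨u, hu⟩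
  exact ⟨t, congrArg Subtype.val ht⟩

lemma exists_mulVec_eq_smul_of_anticomm {c : Matrix (Fin 2) (Fin 2) F} (hc : c ≠ 0)
    {v : Fin 2 → F} (hv0 : v ≠ 0) (hv : c *ᵥ v = 0) {a : Matrix (Fin 2) (Fin 2) F}
    (hac : a * c + c * a = 0) : ∃ t : F, t • v = a *ᵥ v := by
  refine exists_smul_eq_of_mulVec_eq_zero hc hv0 hv ?_
  rw [mulVec_mulVec, eq_neg_of_add_eq_zero_right hac, neg_mulVec, ← mulVec_mulVec, hv,
    mulVec_zero, neg_zero]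

end Conjugation

section Traceless

variable {F : Type*} [Field F]

lemma trace_eq_zero_iff_fin_two {a : Matrix (Fin 2) (Fin 2) F} :
    a.trace = 0 ↔ a 1 1 = -a 0 0 := by
  rw [trace_fin_two, eq_neg_iff_add_eq_zero, add_comm]

lemma exists_eq_of_trace_eq_zero_of_apply_one_zero (h2 : (2 : F) ≠ 0)
    {M : Matrix (Fin 2) (Fin 2) F} (hM : M.trace = 0) (h10 : M 1 0 = 0) :
    ∃ x y : F, M = !![x, 2 * y; 0, -x] := by
  rw [trace_eq_zero_iff_fin_two] at hM
  refine ⟨M 0 0, M 0 1 / 2, ?_⟩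
  rw [mul_div_cancel₀ _ h2, ← h10, ← hM]
  exact eta_fin_two M

lemma mul_self_eq_neg_det_smul_one_of_trace_eq_zero {a : Matrix (Fin 2) (Fin 2) F}
    (ha : a.trace = 0) : a * a = -a.det • (1 : Matrix (Fin 2) (Fin 2) F) := by
  rw [trace_eq_zero_iff_fin_two] at ha
  rw [eta_fin_two a, mul_fin_two, det_fin_two_of, ha]
  ext i j; fin_cases i <;> fin_cases j <;> simp <;> ring

lemma matCross_swap (a b : Matrix (Fin 2) (Fin 2) F) : matCross b a = -matCross a b := by
  rw [matCross, matCross, ← smul_neg, neg_sub]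

lemma mul_matCross_add_matCross_mul_left {a : Matrix (Fin 2) (Fin 2) F} (ha : a.trace = 0)
    (b : Matrix (Fin 2) (Fin 2) F) : a * matCross a b + matCross a b * a = 0 := by
  have hcomm : a * a * b = b * a * a := by
    rw [Matrix.mul_assoc b, mul_self_eq_neg_det_smul_one_of_trace_eq_zero ha, smul_mul_assoc,
      mul_smul_comm, one_mul, mul_one]
  simp only [matCross, mul_smul_comm, smul_mul_assoc, ← smul_add, mul_sub, sub_mul,
    ← Matrix.mul_assoc, hcomm]
  rw [sub_add_sub_cancel, sub_self, smul_zero]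

lemma mul_matCross_add_matCross_mul_right {b : Matrix (Fin 2) (Fin 2) F} (hb : b.trace = 0)
    (a : Matrix (Fin 2) (Fin 2) F) : b * matCross a b + matCross a b * b = 0 := by
  rw [← neg_neg (matCross a b), ← matCross_swap, mul_neg, neg_mul, ← neg_add,
    mul_matCross_add_matCross_mul_left hb, neg_zero]

def tracelessCoords (a : Matrix (Fin 2) (Fin 2) F) : Fin 3 → F := ![a 0 0, a 0 1, a 1 0]

lemma matCross_eq_cross_tracelessCoords (h2 : (2 : F) ≠ 0) {a b : Matrix (Fin 2) (Fin 2) F}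
    (ha : a.trace = 0) (hb : b.trace = 0) :
    let u := tracelessCoords a ⨯₃ tracelessCoords b
    matCross a b = !![u 0 / 2, u 2; u 1, -(u 0 / 2)] := by
  rw [trace_eq_zero_iff_fin_two] at ha hb
  rw [matCross, eta_fin_two a, eta_fin_two b, mul_fin_two, mul_fin_two]
  simp only [tracelessCoords, cross_apply, ha, hb]
  ext i j; fin_cases i <;> fin_cases j <;> simp <;> field_simp <;> ring

lemma linearIndependent_tracelessCoords {a b : Matrix (Fin 2) (Fin 2) F}
    (ha : a.trace = 0) (hb : b.trace = 0) (hli : LinearIndependent F ![a, b]) :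
    LinearIndependent F ![tracelessCoords a, tracelessCoords b] := by
  rw [LinearIndependent.pair_iff] at hli ⊢
  intro s t hst
  apply hli
  have hst' := congrFun hst
  rw [trace_eq_zero_iff_fin_two] at ha hb
  ext i j
  fin_cases i <;> fin_cases j
  · simpa [tracelessCoords] using hst' 0
  · simpa [tracelessCoords] using hst' 1
  · simpa [tracelessCoords] using hst' 2
  · have h00 : s * a 0 0 + t * b 0 0 = 0 := by simpa [tracelessCoords] using hst' 0
    simp [ha, hb]
    linear_combination -h00

lemma matCross_ne_zero (h2 : (2 : F) ≠ 0) {a b : Matrix (Fin 2) (Fin 2) F}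
    (ha : a.trace = 0) (hb : b.trace = 0) (hli : LinearIndependent F ![a, b]) :
    matCross a b ≠ 0 := by
  intro h
  apply crossProduct_ne_zero_iff_linearIndependent.mpr
    (linearIndependent_tracelessCoords ha hb hli)
  rw [matCross_eq_cross_tracelessCoords h2 ha hb] at h
  have h00 := congrFun (congrFun h 0) 0
  have h10 := congrFun (congrFun h 1) 0
  have h01 := congrFun (congrFun h 0) 1
  simp [h2] at h00 h10 h01
  ext i; fin_cases i <;> simpa

lemma matCross_upperTriangular (h2 : (2 : F) ≠ 0) (a₁ a₃ b₁ b₃ : F) :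
    matCross !![a₃, 2 * a₁; 0, -a₃] !![b₃, 2 * b₁; 0, -b₃]
      = !![0, 2 * (a₃ * b₁ - a₁ * b₃); 0, 0] := by
  rw [matCross_eq_cross_tracelessCoords h2 (by simp) (by simp)]
  ext i j; fin_cases i <;> fin_cases j <;> simp [tracelessCoords, cross_apply]; ring

lemma smul_sub_smul_add_matCross_upperTriangular (h2 : (2 : F) ≠ 0) (a₁ a₃ b₁ b₃ : F) :
    b₃ • !![a₃, 2 * a₁; 0, -a₃] - a₃ • !![b₃, 2 * b₁; 0, -b₃] +
      matCross !![a₃, 2 * a₁; 0, -a₃] !![b₃, 2 * b₁; 0, -b₃] = 0 := by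
  rw [matCross_upperTriangular h2]
  ext i j; fin_cases i <;> fin_cases j <;> simp <;> ring

end Traceless

/-- linearly independent traceless `a, b` with `det(a×b) = 0` can
be simultaneously conjugated to upper triangular form
`C⁻¹aC = [[a₃, 2a₁],[0, −a₃]]`, `C⁻¹bC = [[b₃, 2b₁],[0, −b₃]]`, in which case
their cross product is `[[0, 2(a₃b₁ − a₁b₃)],[0, 0]]` and
`b₃·(C⁻¹aC) − a₃·(C⁻¹bC) + (C⁻¹aC)×(C⁻¹bC) = 0`. -/
theorem stmt13 {F : Type*} [Field F] (h2 : (2 : F) ≠ 0)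
    (a b : Matrix (Fin 2) (Fin 2) F) (ha : a.trace = 0) (hb : b.trace = 0)
    (hli : LinearIndependent F ![a, b]) (hdet : (matCross a b).det = 0) :
    ∃ (C : Matrix (Fin 2) (Fin 2) F) (a₁ a₃ b₁ b₃ : F), IsUnit C ∧
      C⁻¹ * a * C = !![a₃, 2 * a₁; 0, -a₃] ∧
      C⁻¹ * b * C = !![b₃, 2 * b₁; 0, -b₃] ∧
      matCross (C⁻¹ * a * C) (C⁻¹ * b * C) = !![0, 2 * (a₃ * b₁ - a₁ * b₃); 0, 0] ∧
      b₃ • (C⁻¹ * a * C) - a₃ • (C⁻¹ * b * C) +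
        matCross (C⁻¹ * a * C) (C⁻¹ * b * C) = 0 := by
  have hc := matCross_ne_zero h2 ha hb hli
  obtain ⟨v, hv0, hv⟩ := exists_mulVec_eq_zero_iff.mpr hdet
  obtain ⟨C, hC, hCv⟩ := exists_isUnit_col_zero_eq hv0
  have htri : ∀ m : Matrix (Fin 2) (Fin 2) F, m.trace = 0 →
      m * matCross a b + matCross a b * m = 0 →
      ∃ x y : F, C⁻¹ * m * C = !![x, 2 * y; 0, -x] := by
    intro m hm hmc
    obtain ⟨t, ht⟩ := exists_mulVec_eq_smul_of_anticomm hc hv0 hv hmc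
    refine exists_eq_of_trace_eq_zero_of_apply_one_zero h2 (by rwa [trace_conj' hC]) ?_
    exact conj_apply_eq_zero_of_mulVec_col_eq_smul hC (by rw [hCv, ht]) (by decide)
  obtain ⟨a₃, a₁, hA⟩ := htri a ha (mul_matCross_add_matCross_mul_left ha b)
  obtain ⟨b₃, b₁, hB⟩ := htri b hb (mul_matCross_add_matCross_mul_right hb a)
  refine ⟨C, a₁, a₃, b₁, b₃, hC, hA, hB, ?_, ?_⟩ <;> rw [hA, hB]
  · exact matCross_upperTriangular h2 a₁ a₃ b₁ b₃
  · exact smul_sub_smul_add_matCross_upperTriangular h2 a₁ a₃ b₁ b₃
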